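/- Let υ* > 0 and τ̃ > 0 and let a(t) = υ*·(t + τ̃·sin(t/τ̃)). Then for every t with a(t) ≠ 0, −a''(t)/a(t) = υ*²·((t/τ̃)·sin(t/τ̃) + sin²(t/τ̃))/a(t)². Consequently, the net gravitational mass density Δ = −(3/(4πG))·a''/a determined by the acceleration equation decomposes as Δ = Δ₊₊ + Δ₊₋ with Δ₊₊ = (3/(4πG))·υ*²·sin²(t/τ̃)/a(t)² ≥ 0 and Δ₊₋ = (3/(4πG))·υ*²·(t/τ̃)·sin(t/τ̃)/a(t)². -/

import Mathlib

/-!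
Writing `s = sin (t/τ̃)`, the scale factor has `ä = -(υ*/τ̃) s`, and `υ* (t/τ̃ + s) = a/τ̃`, so
`-ä/a = υ* s/(τ̃ a) = υ*² s (t/τ̃ + s)/a²`. Multiplying by `3/(4πG)` splits `Δ` into the manifestly
nonnegative `sin²` part and the sign-changing `(t/τ̃) sin` part.
-/

open Real

noncomputable section

def cyclicScaleFactor (υ τ : ℝ) (t : ℝ) : ℝ :=
  υ * (t + τ * sin (t / τ))

variable {υ τ : ℝ}

theorem hasDerivAt_cyclicScaleFactor (hτ : τ ≠ 0) (t : ℝ) :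
    HasDerivAt (cyclicScaleFactor υ τ) (υ * (1 + cos (t / τ))) t := by
  have hsin := (hasDerivAt_sin (t / τ)).comp t ((hasDerivAt_id t).div_const τ)
  refine ((hasDerivAt_id t).add (hsin.const_mul τ)).const_mul υ |>.congr_deriv ?_
  field_simp

theorem deriv_cyclicScaleFactor (hτ : τ ≠ 0) :
    deriv (cyclicScaleFactor υ τ) = fun t => υ * (1 + cos (t / τ)) :=
  funext fun t => (hasDerivAt_cyclicScaleFactor hτ t).deriv

theorem deriv_deriv_cyclicScaleFactor (hτ : τ ≠ 0) (t : ℝ) :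
    deriv (deriv (cyclicScaleFactor υ τ)) t = -(υ / τ) * sin (t / τ) := by
  rw [deriv_cyclicScaleFactor hτ]
  have hcos := (hasDerivAt_cos (t / τ)).comp t ((hasDerivAt_id t).div_const τ)
  refine (((hasDerivAt_const t (1 : ℝ)).add hcos).const_mul υ |>.congr_deriv ?_).deriv
  ring

theorem neg_deriv_deriv_div_cyclicScaleFactor (hτ : τ ≠ 0) (t : ℝ) :
    -deriv (deriv (cyclicScaleFactor υ τ)) t / cyclicScaleFactor υ τ t
      = υ ^ 2 * ((t / τ) * sin (t / τ) + sin (t / τ) ^ 2) / cyclicScaleFactor υ τ t ^ 2 := by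
  rw [deriv_deriv_cyclicScaleFactor hτ, cyclicScaleFactor]
  field_simp

end

theorem gravitational_mass_density_decomposition_general
    (υ τr G : ℝ) (hτ : 0 < τr) (hG : 0 < G) :
    let a : ℝ → ℝ := fun t => υ * (t + τr * Real.sin (t / τr))
    let Δ : ℝ → ℝ := fun t => -(3 / (4 * π * G)) * (deriv (deriv a) t / a t)
    let Δpp : ℝ → ℝ := fun t => (3 / (4 * π * G)) * υ ^ 2 * (Real.sin (t / τr)) ^ 2 / (a t) ^ 2
    let Δpm : ℝ → ℝ := fun t => (3 / (4 * π * G)) * υ ^ 2 * ((t / τr) * Real.sin (t / τr)) / (a t) ^ 2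
    ∀ t : ℝ, a t ≠ 0 →
      (-(deriv (deriv a) t) / a t
          = υ ^ 2 * ((t / τr) * Real.sin (t / τr) + (Real.sin (t / τr)) ^ 2) / (a t) ^ 2) ∧
      Δ t = Δpp t + Δpm t ∧ 0 ≤ Δpp t := by
  intro a Δ Δpp Δpm t _
  have hacc : -deriv (deriv a) t / a t
      = υ ^ 2 * ((t / τr) * sin (t / τr) + sin (t / τr) ^ 2) / a t ^ 2 :=
    neg_deriv_deriv_div_cyclicScaleFactor hτ.ne' t
  refine ⟨hacc, ?_, ?_⟩
  · calc Δ t = (3 / (4 * π * G)) * (-deriv (deriv a) t / a t) := by simp only [Δ]; ring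
      _ = Δpp t + Δpm t := by rw [hacc]; simp only [Δpp, Δpm]; ring
  · have := pi_pos
    positivity

theorem gravitational_mass_density_decomposition
    (υ τr G : ℝ) (hυ : 0 < υ) (hτ : 0 < τr) (hG : 0 < G) :
    let a : ℝ → ℝ := fun t => υ * (t + τr * Real.sin (t / τr))
    let Δ : ℝ → ℝ := fun t => -(3 / (4 * π * G)) * (deriv (deriv a) t / a t)
    let Δpp : ℝ → ℝ := fun t => (3 / (4 * π * G)) * υ ^ 2 * (Real.sin (t / τr)) ^ 2 / (a t) ^ 2
    let Δpm : ℝ → ℝ := fun t => (3 / (4 * π * G)) * υ ^ 2 * ((t / τr) * Real.sin (t / τr)) / (a t) ^ 2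
    ∀ t : ℝ, a t ≠ 0 →
      (-(deriv (deriv a) t) / a t
          = υ ^ 2 * ((t / τr) * Real.sin (t / τr) + (Real.sin (t / τr)) ^ 2) / (a t) ^ 2) ∧
      Δ t = Δpp t + Δpm t ∧ 0 ≤ Δpp t :=
  gravitational_mass_density_decomposition_general υ τr G hτ hG
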